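/- arXiv:2112.02499 — 2 statements merged into one kernel-verified Lean document; each statement's English description precedes it below -/
import Mathlib

section
/- Let γ > d/2 > 0 and 0 < λ < 1. Then there is a constant c₅ depending only on d and γ such that ∑_{k=1}^∞ k^{d−1}·k^{−2γ}/(k^{−2γ} + λ) ≤ c₅·λ^{−d/(2γ)}. -/
open Real

/-- Bernoulli inequality for nonpositive exponents. -/
lemma bern_neg {x p : ℝ} (hx : -1 < x) (hp : p ≤ 0) : 1 + p * x ≤ (1 + x) ^ p := by
  have h1 : (0:ℝ) < 1 + x := by linarith
  rw [Real.rpow_def_of_pos h1]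
  have hlog : Real.log (1 + x) ≤ x := by
    have := Real.log_le_sub_one_of_pos h1
    linarith
  have h2 : p * x ≤ p * Real.log (1 + x) := mul_le_mul_of_nonpos_left hlog hp
  calc 1 + p * x ≤ 1 + p * Real.log (1 + x) := by linarith
    _ ≤ Real.exp (Real.log (1 + x) * p) := by
        have := Real.add_one_le_exp (Real.log (1 + x) * p)
        have hc : p * Real.log (1 + x) = Real.log (1 + x) * p := mul_comm _ _
        linarith

/-- Step bound: `(s-1) (a+1)^{-s} ≤ a^{1-s} - (a+1)^{1-s}` for `a ≥ 1`, `s > 1`. -/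
lemma step_bound {a s : ℝ} (ha : 1 ≤ a) (hs : 1 < s) :
    (s - 1) * (a + 1) ^ (-s) ≤ a ^ (1 - s) - (a + 1) ^ (1 - s) := by
  have hb : (0:ℝ) < a + 1 := by linarith
  have ha0 : (0:ℝ) < a := by linarith
  have key := bern_neg (x := -1 / (a + 1)) (p := 1 - s)
    (by rw [neg_div]; rw [neg_lt_neg_iff]; rw [div_lt_one hb]; linarith)
    (by linarith)
  have hx : 1 + (-1 / (a + 1)) = a / (a + 1) := by field_simp; ring
  rw [hx] at key
  have hdiv : (a / (a + 1)) ^ (1 - s) = a ^ (1 - s) / (a + 1) ^ (1 - s) :=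
    Real.div_rpow ha0.le hb.le (1-s)
  rw [hdiv] at key
  have hbp : (0:ℝ) < (a + 1) ^ (1 - s) := Real.rpow_pos_of_pos hb _
  -- key : 1 + (1-s) * (-1/(a+1)) ≤ a^{1-s} / (a+1)^{1-s}
  have key2 : (1 + (1 - s) * (-1 / (a + 1))) * (a + 1) ^ (1 - s) ≤ a ^ (1 - s) := by
    rw [← le_div_iff₀ hbp]; exact key
  have hexp : (a + 1) ^ (1 - s) / (a + 1) = (a + 1) ^ (-s) := by
    rw [show (a + 1) ^ (1 - s) / (a + 1) = (a + 1) ^ (1 - s) / (a + 1) ^ (1:ℝ) by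
      rw [Real.rpow_one], ← Real.rpow_sub hb]
    norm_num
  have hrw : (1 + (1 - s) * (-1 / (a + 1))) * (a + 1) ^ (1 - s)
      = (a + 1) ^ (1 - s) + (s - 1) * ((a + 1) ^ (1 - s) / (a + 1)) := by ring
  rw [hrw, hexp] at key2
  linarith

/-- Tail bound: `∑_{i} (i+N+1)^{-s} ≤ N^{1-s}/(s-1)` for `s > 1`, `N ≥ 1`. -/
lemma tail_bound {s : ℝ} (hs : 1 < s) {N : ℕ} (hN : 1 ≤ N) :
    ∑' i : ℕ, ((i : ℝ) + N + 1) ^ (-s) ≤ (N : ℝ) ^ (1 - s) / (s - 1) := by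
  have hs1 : (0:ℝ) < s - 1 := by linarith
  apply Real.tsum_le_of_sum_range_le (fun n => Real.rpow_nonneg (by positivity) _)
  intro n
  have key : ∀ i : ℕ, ((i:ℝ) + N + 1) ^ (-s)
      ≤ (((i:ℝ) + N) ^ (1 - s) - (((i:ℝ)+1) + N) ^ (1 - s)) / (s - 1) := by
    intro i
    rw [le_div_iff₀ hs1]
    have hai : (1:ℝ) ≤ (i:ℝ) + N := by
      have : (1:ℝ) ≤ (N:ℝ) := by exact_mod_cast hN
      have : (0:ℝ) ≤ (i:ℝ) := Nat.cast_nonneg i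
      linarith
    have := step_bound hai hs
    have harr : ((i:ℝ) + N + 1) = ((i:ℝ)+1) + N := by ring
    calc ((i:ℝ) + N + 1) ^ (-s) * (s - 1) = (s - 1) * (((i:ℝ) + N) + 1) ^ (-s) := by ring_nf
      _ ≤ ((i:ℝ) + N) ^ (1-s) - (((i:ℝ) + N) + 1) ^ (1-s) := this
      _ = ((i:ℝ) + N) ^ (1 - s) - (((i:ℝ)+1) + N) ^ (1 - s) := by ring_nf
  calc ∑ i ∈ Finset.range n, ((i:ℝ) + N + 1) ^ (-s)
      ≤ ∑ i ∈ Finset.range n, ((((i:ℝ) + N) ^ (1 - s) - (((i:ℝ)+1) + N) ^ (1 - s)) / (s - 1)) :=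
        Finset.sum_le_sum fun i _ => key i
    _ = (∑ i ∈ Finset.range n, (((i:ℝ) + N) ^ (1 - s) - (((i+1:ℕ):ℝ) + N) ^ (1 - s))) / (s-1) := by
        rw [← Finset.sum_div]
        congr 1
        apply Finset.sum_congr rfl
        intro i _
        push_cast
        ring_nf
    _ = ((((0:ℕ):ℝ) + N) ^ (1 - s) - (((n:ℕ):ℝ) + N) ^ (1 - s)) / (s - 1) := by
        rw [Finset.sum_range_sub' (fun i : ℕ => ((i:ℝ) + N) ^ (1 - s)) n]
    _ ≤ (N : ℝ) ^ (1 - s) / (s - 1) := by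
        have h1 : (0:ℝ) ≤ (((n:ℕ):ℝ) + N) ^ (1-s) := Real.rpow_nonneg (by positivity) _
        have h2 : (((0:ℕ):ℝ) + N) = (N:ℝ) := by norm_num
        rw [h2]
        gcongr
        linarith

set_option maxHeartbeats 1000000 in
/-- Effective-dimension bound: for `γ > d/2` there is a constant `c₅` (depending only
on `d` and `γ`) such that `∑_{k≥1} k^{d-1} k^{-2γ} / (k^{-2γ} + λ) ≤ c₅ λ^{-d/(2γ)}`
for all `0 < λ < 1`. -/
theorem stmt3 (d : ℕ) (hd : 0 < d) (γ : ℝ) (hγ : (d : ℝ) / 2 < γ) :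
    ∃ c₅ : ℝ, 0 < c₅ ∧ ∀ lam : ℝ, 0 < lam → lam < 1 →
      ∑' k : ℕ+, ((k : ℝ) ^ ((d : ℝ) - 1) * (k : ℝ) ^ (-(2 * γ)) /
          ((k : ℝ) ^ (-(2 * γ)) + lam))
        ≤ c₅ * lam ^ (-(d : ℝ) / (2 * γ)) := by
  have hd1 : (1:ℝ) ≤ (d:ℝ) := by exact_mod_cast hd
  have h2γ : (0:ℝ) < 2 * γ := by linarith
  have hsd : (0:ℝ) < 2 * γ - d := by linarith
  refine ⟨2 ^ d + 1 / (2 * γ - (d:ℝ)), by positivity, ?_⟩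
  intro lam h0 h1
  obtain ⟨s, hs_def⟩ : ∃ s : ℝ, s = 2 * γ - (d:ℝ) + 1 := ⟨_, rfl⟩
  have hs : 1 < s := by rw [hs_def]; linarith
  obtain ⟨K, hK_def⟩ : ∃ K : ℝ, K = lam ^ (-1 / (2 * γ)) := ⟨_, rfl⟩
  have hK0 : 0 < K := by rw [hK_def]; exact Real.rpow_pos_of_pos h0 _
  have hK1 : 1 < K := by
    rw [hK_def]
    exact (Real.one_lt_rpow_iff_of_pos h0).mpr
      (Or.inr ⟨h1, div_neg_of_neg_of_pos (by norm_num) h2γ⟩)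
  obtain ⟨N, hN1, hKN, hN2K⟩ : ∃ N : ℕ, 1 ≤ N ∧ K ≤ (N:ℝ) ∧ (N:ℝ) ≤ 2 * K := by
    refine ⟨⌈K⌉₊, Nat.one_le_ceil_iff.mpr hK0, Nat.le_ceil K, ?_⟩
    have := Nat.ceil_lt_add_one hK0.le
    linarith
  have hNpos : (0:ℝ) < (N:ℝ) := by exact_mod_cast hN1
  obtain ⟨g, hg_def⟩ : ∃ g : ℕ → ℝ, g = fun n : ℕ =>
      ((n:ℝ) + 1) ^ ((d:ℝ) - 1) * ((n:ℝ) + 1) ^ (-(2 * γ)) /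
        (((n:ℝ) + 1) ^ (-(2 * γ)) + lam) := ⟨_, rfl⟩
  have hxpos : ∀ n : ℕ, (0:ℝ) < (n:ℝ) + 1 := fun n => by positivity
  have hg_nonneg : ∀ n : ℕ, 0 ≤ g n := by
    intro n
    have h1' : (0:ℝ) ≤ ((n:ℝ) + 1) ^ ((d:ℝ) - 1) := Real.rpow_nonneg (hxpos n).le _
    have h2' : (0:ℝ) ≤ ((n:ℝ) + 1) ^ (-(2 * γ)) := Real.rpow_nonneg (hxpos n).le _
    have h3' : (0:ℝ) < ((n:ℝ) + 1) ^ (-(2 * γ)) + lam := by positivity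
    rw [hg_def]
    exact div_nonneg (mul_nonneg h1' h2') h3'.le
  have hbound1 : ∀ n : ℕ, g n ≤ ((n:ℝ) + 1) ^ ((d:ℝ) - 1) := by
    intro n
    have h1' : (0:ℝ) ≤ ((n:ℝ) + 1) ^ ((d:ℝ) - 1) := Real.rpow_nonneg (hxpos n).le _
    have h2' : (0:ℝ) ≤ ((n:ℝ) + 1) ^ (-(2 * γ)) := Real.rpow_nonneg (hxpos n).le _
    have h3' : (0:ℝ) < ((n:ℝ) + 1) ^ (-(2 * γ)) + lam := by positivity
    rw [hg_def]
    simp only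
    rw [div_le_iff₀ h3']
    nlinarith
  have hbound2 : ∀ n : ℕ, g n ≤ lam⁻¹ * ((n:ℝ) + 1) ^ ((d:ℝ) - 1 - 2 * γ) := by
    intro n
    have h1' : (0:ℝ) ≤ ((n:ℝ) + 1) ^ ((d:ℝ) - 1) := Real.rpow_nonneg (hxpos n).le _
    have h2' : (0:ℝ) ≤ ((n:ℝ) + 1) ^ (-(2 * γ)) := Real.rpow_nonneg (hxpos n).le _
    have hrw : ((n:ℝ) + 1) ^ ((d:ℝ) - 1 - 2 * γ)
        = ((n:ℝ) + 1) ^ ((d:ℝ) - 1) * ((n:ℝ) + 1) ^ (-(2 * γ)) := by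
      rw [show (d:ℝ) - 1 - 2 * γ = ((d:ℝ) - 1) + (-(2 * γ)) by ring,
        Real.rpow_add (hxpos n)]
    rw [hrw, hg_def]
    simp only
    calc ((n:ℝ) + 1) ^ ((d:ℝ) - 1) * ((n:ℝ) + 1) ^ (-(2 * γ)) /
          (((n:ℝ) + 1) ^ (-(2 * γ)) + lam)
        ≤ ((n:ℝ) + 1) ^ ((d:ℝ) - 1) * ((n:ℝ) + 1) ^ (-(2 * γ)) / lam := by
          gcongr
          linarith
      _ = lam⁻¹ * (((n:ℝ) + 1) ^ ((d:ℝ) - 1) * ((n:ℝ) + 1) ^ (-(2 * γ))) := by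
          rw [div_eq_inv_mul]
  have hexp_lt : (d:ℝ) - 1 - 2 * γ < -1 := by linarith
  have hsumN : Summable (fun n : ℕ => ((n:ℝ) + 1) ^ ((d:ℝ) - 1 - 2 * γ)) := by
    have h := Real.summable_nat_rpow.mpr hexp_lt
    have h' := (summable_nat_add_iff 1).mpr h
    refine h'.congr fun n => ?_
    push_cast
    ring_nf
  have hg_sum : Summable g :=
    Summable.of_nonneg_of_le hg_nonneg hbound2 (hsumN.mul_left lam⁻¹)
  have hequiv : ∑' k : ℕ+, ((k : ℝ) ^ ((d : ℝ) - 1) * (k : ℝ) ^ (-(2 * γ)) /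
      ((k : ℝ) ^ (-(2 * γ)) + lam)) = ∑' n : ℕ, g n := by
    rw [← Equiv.pnatEquivNat.symm.tsum_eq (fun k : ℕ+ =>
      ((k : ℝ) ^ ((d : ℝ) - 1) * (k : ℝ) ^ (-(2 * γ)) / ((k : ℝ) ^ (-(2 * γ)) + lam)))]
    apply tsum_congr
    intro n
    have hc : ((Equiv.pnatEquivNat.symm n : ℕ+) : ℝ) = (n:ℝ) + 1 := by
      simp [Equiv.pnatEquivNat, Nat.succPNat]
    rw [hg_def]
    simp only [hc]
  -- tail summability
  have htail_sum : Summable (fun i : ℕ => ((i:ℝ) + (N:ℝ) + 1) ^ (-s)) := by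
    have h := Real.summable_nat_rpow.mpr (show -s < -1 by linarith)
    have h' := (summable_nat_add_iff (N + 1)).mpr h
    refine h'.congr fun n => ?_
    push_cast
    ring_nf
  have htail : ∑' i : ℕ, g (i + N) ≤ lam⁻¹ * ((N:ℝ) ^ (1 - s) / (s - 1)) := by
    have step1 : ∑' i : ℕ, g (i + N) ≤ ∑' i : ℕ, lam⁻¹ * ((i:ℝ) + (N:ℝ) + 1) ^ (-s) := by
      apply Summable.tsum_le_tsum _ ((summable_nat_add_iff (f := g) N).mpr hg_sum) (htail_sum.mul_left lam⁻¹)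
      intro i
      have h := hbound2 (i + N)
      have hc1 : (((i + N : ℕ)):ℝ) + 1 = (i:ℝ) + (N:ℝ) + 1 := by push_cast; ring
      have hc2 : (d:ℝ) - 1 - 2 * γ = -s := by rw [hs_def]; ring
      rwa [hc1, hc2] at h
    rw [tsum_mul_left] at step1
    refine step1.trans ?_
    gcongr
    exact tail_bound hs hN1
  have hhead : ∑ i ∈ Finset.range N, g i ≤ (N:ℝ) * (N:ℝ) ^ ((d:ℝ) - 1) := by
    calc ∑ i ∈ Finset.range N, g i ≤ ∑ _i ∈ Finset.range N, (N:ℝ) ^ ((d:ℝ) - 1) := by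
          apply Finset.sum_le_sum
          intro i hi
          refine (hbound1 i).trans ?_
          apply Real.rpow_le_rpow (hxpos i).le _ (by linarith)
          have : i + 1 ≤ N := Finset.mem_range.mp hi
          exact_mod_cast this
      _ = (N:ℝ) * (N:ℝ) ^ ((d:ℝ) - 1) := by
          rw [Finset.sum_const, Finset.card_range, nsmul_eq_mul]
  have hhead2 : (N:ℝ) * (N:ℝ) ^ ((d:ℝ) - 1) = (N:ℝ) ^ ((d:ℝ)) := by
    calc (N:ℝ) * (N:ℝ) ^ ((d:ℝ) - 1) = (N:ℝ) ^ (1:ℝ) * (N:ℝ) ^ ((d:ℝ) - 1) := by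
          rw [Real.rpow_one]
      _ = (N:ℝ) ^ (1 + ((d:ℝ) - 1)) := (Real.rpow_add hNpos _ _).symm
      _ = (N:ℝ) ^ ((d:ℝ)) := by norm_num
  have hhead3 : (N:ℝ) ^ ((d:ℝ)) ≤ (2 * K) ^ ((d:ℝ)) :=
    Real.rpow_le_rpow hNpos.le hN2K (by positivity)
  have hKd : (2 * K) ^ ((d:ℝ)) = 2 ^ d * lam ^ (-(d:ℝ) / (2 * γ)) := by
    rw [Real.mul_rpow (by norm_num) hK0.le]
    congr 1
    · exact Real.rpow_natCast 2 d
    · rw [hK_def, ← Real.rpow_mul h0.le]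
      congr 1
      field_simp
  have htail2 : lam⁻¹ * ((N:ℝ) ^ (1 - s) / (s - 1))
      ≤ (1 / (2 * γ - (d:ℝ))) * lam ^ (-(d:ℝ) / (2 * γ)) := by
    have hNK' : (N:ℝ) ^ (1 - s) ≤ K ^ (1 - s) :=
      Real.rpow_le_rpow_of_nonpos hK0 hKN (by linarith)
    have hKs : lam⁻¹ * K ^ (1 - s) = lam ^ (-(d:ℝ) / (2 * γ)) := by
      rw [hK_def, ← Real.rpow_mul h0.le, ← Real.rpow_neg_one lam, ← Real.rpow_add h0]
      congr 1
      rw [hs_def]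
      have hγ0 : γ ≠ 0 := by linarith
      field_simp
      ring
    have hs1 : s - 1 = 2 * γ - (d:ℝ) := by rw [hs_def]; ring
    calc lam⁻¹ * ((N:ℝ) ^ (1 - s) / (s - 1)) ≤ lam⁻¹ * (K ^ (1 - s) / (s - 1)) := by
          gcongr
      _ = (1 / (s - 1)) * (lam⁻¹ * K ^ (1 - s)) := by ring
      _ = (1 / (2 * γ - (d:ℝ))) * lam ^ (-(d:ℝ) / (2 * γ)) := by rw [hKs, hs1]
  rw [hequiv, ← Summable.sum_add_tsum_nat_add N hg_sum]
  calc ∑ i ∈ Finset.range N, g i + ∑' i : ℕ, g (i + N)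
      ≤ 2 ^ d * lam ^ (-(d:ℝ) / (2 * γ)) + (1 / (2 * γ - (d:ℝ))) * lam ^ (-(d:ℝ) / (2 * γ)) := by
        apply add_le_add
        · exact hhead.trans (hhead2 ▸ (hhead3.trans_eq hKd))
        · exact htail.trans htail2
    _ = (2 ^ d + 1 / (2 * γ - (d:ℝ))) * lam ^ (-(d:ℝ) / (2 * γ)) := by ring
end

section
/- Let H be a Hilbert space and A, B positive self-adjoint bounded operators on H. Then for every u ∈ [0,1], ‖A^u B^u‖ ≤ ‖AB‖^u (the Cordes inequality). -/
open scoped NNReal ENNReal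
open Filter

section Aux

lemma cordes_specRad_mul_comm {B : Type*} [NormedRing B] [NormedAlgebra ℂ B] (a b : B) :
    spectralRadius ℂ (a * b) = spectralRadius ℂ (b * a) := by
  have key : ∀ c d : B, spectralRadius ℂ (c * d) ≤ spectralRadius ℂ (d * c) := by
    intro c d
    rw [spectralRadius, spectralRadius]
    refine iSup₂_le fun k hk => ?_
    rcases eq_or_ne k 0 with rfl | hk0
    · simp
    · have hmem : k ∈ spectrum ℂ (c * d) \ {0} := ⟨hk, hk0⟩
      rw [spectrum.nonzero_mul_comm (𝕜 := ℂ) c d] at hmem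
      exact le_iSup₂ (f := fun k (_ : k ∈ spectrum ℂ (d * c)) => (‖k‖₊ : ℝ≥0∞)) k hmem.1
  exact le_antisymm (key a b) (key b a)

variable {A : Type*} [CStarAlgebra A] [PartialOrder A] [StarOrderedRing A]

lemma cordes_rpow_add {a : A} (ha : 0 ≤ a) {s t : ℝ} (hs : 0 ≤ s) (ht : 0 ≤ t)
    (hst : 0 < s + t) : CFC.rpow a (s + t) = CFC.rpow a s * CFC.rpow a t := by
  simp only [CFC.rpow_eq_pow, CFC.rpow_def]
  rw [← cfc_mul _ _ a (NNReal.continuous_rpow_const hs).continuousOn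
    (NNReal.continuous_rpow_const ht).continuousOn]
  exact cfc_congr fun z hz => NNReal.rpow_add' hst.ne' z

lemma cordes_sa_rpow {a : A} (u : ℝ) : star (CFC.rpow a u) = CFC.rpow a u :=
  (IsSelfAdjoint.of_nonneg CFC.rpow_nonneg).star_eq

lemma cordes_key_ineq [Nontrivial A] {a b : A} (ha : 0 ≤ a) (hb : 0 ≤ b) {s t : ℝ}
    (hs : 0 ≤ s) (ht : 0 ≤ t) (hst : 0 < s + t) :
    ‖CFC.rpow a ((s+t)/2) * CFC.rpow b ((s+t)/2)‖₊ ^ 2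
      ≤ ‖CFC.rpow a t * CFC.rpow b t‖₊ * ‖CFC.rpow a s * CFC.rpow b s‖₊ := by
  set m : ℝ := (s+t)/2 with hm_def
  have hm : 0 < m := by positivity
  set X := CFC.rpow a m * CFC.rpow b m with hX
  have hb2m : CFC.rpow b (s+t) = CFC.rpow b m * CFC.rpow b m := by
    rw [show s + t = m + m by rw [hm_def]; ring]
    exact cordes_rpow_add hb hm.le hm.le (by linarith)
  have ha2m : CFC.rpow a (s+t) = CFC.rpow a m * CFC.rpow a m := by
    rw [show s + t = m + m by rw [hm_def]; ring]
    exact cordes_rpow_add ha hm.le hm.le (by linarith)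
  set Z := CFC.rpow a m * (CFC.rpow b (s+t) * CFC.rpow a m) with hZ
  have hXZ : X * star X = Z := by
    rw [hX, hZ, star_mul, cordes_sa_rpow, cordes_sa_rpow, hb2m]
    simp only [mul_assoc]
  have hZsa : IsSelfAdjoint Z := by
    rw [IsSelfAdjoint, hZ]
    simp only [star_mul, cordes_sa_rpow, mul_assoc]
  have chain : (‖Z‖₊ : ℝ≥0∞) ≤
      (‖CFC.rpow a t * CFC.rpow b t‖₊ * ‖CFC.rpow b s * CFC.rpow a s‖₊ : ℝ≥0) := by
    calc (‖Z‖₊ : ℝ≥0∞) = spectralRadius ℂ Z := hZsa.spectralRadius_eq_nnnorm.symm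
      _ = spectralRadius ℂ ((CFC.rpow b (s+t) * CFC.rpow a m) * CFC.rpow a m) :=
          cordes_specRad_mul_comm _ _
      _ = spectralRadius ℂ (CFC.rpow b (s+t) * CFC.rpow a (s+t)) := by
          rw [ha2m]; simp only [mul_assoc]
      _ = spectralRadius ℂ (CFC.rpow a (s+t) * CFC.rpow b (s+t)) :=
          cordes_specRad_mul_comm _ _
      _ = spectralRadius ℂ (CFC.rpow a s * (CFC.rpow a t * (CFC.rpow b t * CFC.rpow b s))) := by
          rw [cordes_rpow_add ha hs ht hst, show s + t = t + s by ring,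
            cordes_rpow_add hb ht hs (by linarith)]
          simp only [mul_assoc]
      _ = spectralRadius ℂ ((CFC.rpow a t * (CFC.rpow b t * CFC.rpow b s)) * CFC.rpow a s) :=
          cordes_specRad_mul_comm _ _
      _ = spectralRadius ℂ ((CFC.rpow a t * CFC.rpow b t) * (CFC.rpow b s * CFC.rpow a s)) := by
          simp only [mul_assoc]
      _ ≤ (‖(CFC.rpow a t * CFC.rpow b t) * (CFC.rpow b s * CFC.rpow a s)‖₊ : ℝ≥0∞) :=
          spectrum.spectralRadius_le_nnnorm (𝕜 := ℂ) _
      _ ≤ _ := by exact_mod_cast ENNReal.coe_le_coe.mpr (nnnorm_mul_le _ _)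
  have chain' : ‖Z‖₊ ≤ ‖CFC.rpow a t * CFC.rpow b t‖₊ * ‖CFC.rpow b s * CFC.rpow a s‖₊ :=
    ENNReal.coe_le_coe.mp chain
  have hswap : ‖CFC.rpow b s * CFC.rpow a s‖₊ = ‖CFC.rpow a s * CFC.rpow b s‖₊ := by
    rw [← nnnorm_star, star_mul, cordes_sa_rpow, cordes_sa_rpow]
  calc ‖X‖₊ ^ 2 = ‖X * star X‖₊ := by rw [CStarRing.nnnorm_self_mul_star, sq]
    _ = ‖Z‖₊ := by rw [hXZ]
    _ ≤ _ := by rw [← hswap]; exact chain'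

lemma cordes_dyadic [Nontrivial A] {a b : A} (ha : 0 ≤ a) (hb : 0 ≤ b) :
    ∀ n k : ℕ, k ≤ 2^n →
      ‖CFC.rpow a ((k:ℝ)/2^n) * CFC.rpow b ((k:ℝ)/2^n)‖ ≤ ‖a*b‖ ^ ((k:ℝ)/2^n) := by
  intro n
  induction n with
  | zero =>
    intro k hk
    interval_cases k
    · norm_num
      rw [CFC.rpow_zero a ha, CFC.rpow_zero b hb, one_mul, norm_one]
    · norm_num
      rw [CFC.rpow_one a ha, CFC.rpow_one b hb]
  | succ n IH =>
    intro k hk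
    have h2 : (2:ℝ)^(n+1) = 2 * 2^n := by ring
    have h2n : (0:ℝ) < 2^n := by positivity
    rcases Nat.even_or_odd k with ⟨j, hj⟩ | ⟨j, hj⟩
    · have hjk : ((k:ℝ))/2^(n+1) = (j:ℝ)/2^n := by
        subst hj; push_cast; rw [h2]; field_simp; ring
      rw [hjk]
      exact IH j (by subst hj; have := Nat.pow_succ 2 n ▸ hk; omega)
    · have hj1 : j + 1 ≤ 2^n := by subst hj; have := Nat.pow_succ 2 n ▸ hk; omega
      have hjn : j ≤ 2^n := by omega
      set s : ℝ := (j:ℝ)/2^n with hs_def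
      set t : ℝ := ((j:ℝ)+1)/2^n with ht_def
      have hs : 0 ≤ s := by positivity
      have ht : 0 < t := by positivity
      have hst : 0 < s + t := by linarith
      have hm : ((k:ℝ))/2^(n+1) = (s+t)/2 := by
        subst hj; rw [hs_def, ht_def]; push_cast; rw [h2]; field_simp; ring
      have Ps := IH j hjn
      have Pt' := IH (j+1) hj1
      have Pt : ‖CFC.rpow a t * CFC.rpow b t‖ ≤ ‖a*b‖ ^ t := by
        rw [ht_def]; push_cast at Pt' ⊢; exact Pt'
      rw [hm]
      set C : ℝ := ‖a*b‖ with hC_def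
      have hC : 0 ≤ C := norm_nonneg _
      have hkey : ‖CFC.rpow a ((s+t)/2) * CFC.rpow b ((s+t)/2)‖ ^ 2
          ≤ ‖CFC.rpow a t * CFC.rpow b t‖ * ‖CFC.rpow a s * CFC.rpow b s‖ := by
        exact_mod_cast cordes_key_ineq ha hb hs ht.le hst
      have h1 : ‖CFC.rpow a t * CFC.rpow b t‖ * ‖CFC.rpow a s * CFC.rpow b s‖
          ≤ C ^ t * C ^ s :=
        mul_le_mul Pt Ps (norm_nonneg _) (by positivity)
      have e1 : C ^ (t+s) = C^t * C^s := Real.rpow_add' hC (ne_of_gt (by linarith))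
      have e2 : C ^ ((s+t)/2 + (s+t)/2) = C^((s+t)/2) * C^((s+t)/2) :=
        Real.rpow_add' hC (ne_of_gt (by linarith))
      have h2' : C ^ t * C ^ s = (C ^ ((s+t)/2)) ^ 2 := by
        rw [← e1, sq, ← e2]
        congr 1
        ring
      have hsq : ‖CFC.rpow a ((s+t)/2) * CFC.rpow b ((s+t)/2)‖ ^ 2 ≤ (C ^ ((s+t)/2)) ^ 2 := by
        calc _ ≤ _ := hkey
          _ ≤ C ^ t * C ^ s := h1
          _ = _ := h2'
      have := Real.sqrt_le_sqrt hsq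
      rwa [Real.sqrt_sq (norm_nonneg _), Real.sqrt_sq (by positivity)] at this

lemma cordes_unif_rpow {M u : ℝ} (hu : 0 < u) {ε : ℝ} (hε : 0 < ε) :
    ∃ δ > 0, δ ≤ u/2 ∧ ∀ v : ℝ, |v - u| < δ → ∀ x : ℝ, x ∈ Set.Icc 0 M →
      |x ^ v - x ^ u| ≤ ε := by
  set K : Set (ℝ × ℝ) := Set.Icc 0 M ×ˢ Set.Icc (u/2) (u+1) with hK_def
  have hK : IsCompact K := isCompact_Icc.prod isCompact_Icc
  have hF : ContinuousOn (fun p : ℝ × ℝ => p.1 ^ p.2) K := fun p hp =>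
    (Real.continuousAt_rpow p (Or.inr (lt_of_lt_of_le (half_pos hu) hp.2.1))).continuousWithinAt
  have hUC := hK.uniformContinuousOn_of_continuous hF
  rw [Metric.uniformContinuousOn_iff] at hUC
  obtain ⟨δ, δpos, hδ⟩ := hUC ε hε
  refine ⟨min δ (min (u/2) 1), by positivity, (min_le_right _ _).trans (min_le_left _ _),
    fun v hv x hx => ?_⟩
  have hv2 : |v - u| < u/2 := lt_of_lt_of_le hv ((min_le_right _ _).trans (min_le_left _ _))
  have hv3 : |v - u| < 1 := lt_of_lt_of_le hv ((min_le_right _ _).trans (min_le_right _ _))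
  rw [abs_sub_lt_iff] at hv2 hv3
  have hvmem : v ∈ Set.Icc (u/2) (u+1) := ⟨by linarith, by linarith⟩
  have humem : u ∈ Set.Icc (u/2) (u+1) := ⟨by linarith, by linarith⟩
  have h1 : (x, v) ∈ K := ⟨hx, hvmem⟩
  have h2 : (x, u) ∈ K := ⟨hx, humem⟩
  have hdist : dist ((x,v) : ℝ × ℝ) (x,u) < δ := by
    rw [Prod.dist_eq]
    simp only [dist_self]
    rw [max_lt_iff]
    exact ⟨δpos, lt_of_lt_of_le (by rwa [Real.dist_eq]) (min_le_left _ _)⟩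
  have := hδ (x,v) h1 (x,u) h2 hdist
  rw [Real.dist_eq] at this
  exact this.le

lemma cordes_cont_rpow [Nontrivial A] {a : A} (ha : 0 ≤ a) {u : ℝ} (hu : 0 < u) :
    ContinuousAt (fun v : ℝ => CFC.rpow a v) u := by
  rw [Metric.continuousAt_iff]
  intro ε hε
  obtain ⟨δ, hδpos, hδu, hδ⟩ := cordes_unif_rpow (M := ‖a‖) hu (half_pos hε)
  refine ⟨δ, hδpos, fun {v} hv => ?_⟩
  rw [Real.dist_eq] at hv
  have hv0 : 0 < v := by
    have := abs_sub_lt_iff.mp (lt_of_lt_of_le hv hδu)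
    linarith
  have repr : ∀ w : ℝ, 0 < w → CFC.rpow a w
      = cfc (fun x : ℝ => ((x.toNNReal ^ w : ℝ≥0) : ℝ)) a := by
    intro w hw
    rw [CFC.rpow_eq_pow, CFC.rpow_def, cfc_nnreal_eq_real _ a ha]
  have hcont : ∀ w : ℝ, 0 ≤ w → Continuous (fun x : ℝ => ((x.toNNReal ^ w : ℝ≥0) : ℝ)) :=
    fun w hw => NNReal.continuous_coe.comp
      ((NNReal.continuous_rpow_const hw).comp continuous_real_toNNReal)
  rw [dist_eq_norm, repr v hv0, repr u hu,
    ← cfc_sub _ _ a (hcont v hv0.le).continuousOn (hcont u hu.le).continuousOn]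
  refine lt_of_le_of_lt (norm_cfc_le (half_pos hε).le fun x hx => ?_) (half_lt_self hε)
  have hx0 : 0 ≤ x := spectrum_nonneg_of_nonneg ha hx
  have hxM : x ≤ ‖a‖ := by
    have := spectrum.norm_le_norm_of_mem hx
    rwa [Real.norm_eq_abs, abs_of_nonneg hx0] at this
  have hcoe : ∀ w : ℝ, ((x.toNNReal ^ w : ℝ≥0) : ℝ) = x ^ w := by
    intro w
    rw [NNReal.coe_rpow, Real.coe_toNNReal x hx0]
  rw [Real.norm_eq_abs, hcoe, hcoe]
  exact hδ v hv x ⟨hx0, hxM⟩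

lemma cordes_general [Nontrivial A] {a b : A} (ha : 0 ≤ a) (hb : 0 ≤ b) {u : ℝ}
    (hu0 : 0 ≤ u) (hu1 : u ≤ 1) :
    ‖CFC.rpow a u * CFC.rpow b u‖ ≤ ‖a * b‖ ^ u := by
  rcases eq_or_lt_of_le hu0 with rfl | hu
  · simp only [CFC.rpow_eq_pow]
    rw [CFC.rpow_zero a ha, CFC.rpow_zero b hb, one_mul, norm_one, Real.rpow_zero]
  set C : ℝ := ‖a * b‖ with hC_def
  have hC : 0 ≤ C := norm_nonneg _
  -- dyadic approximating sequence
  set k : ℕ → ℕ := fun n => ⌊u * 2^n⌋₊ with hk_def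
  set w : ℕ → ℝ := fun n => (k n : ℝ) / 2^n with hw_def
  have h2n : ∀ n : ℕ, (0:ℝ) < 2^n := fun n => by positivity
  have hkle : ∀ n, k n ≤ 2^n := by
    intro n
    have h1 : u * 2^n ≤ ((2^n : ℕ) : ℝ) := by
      push_cast
      nlinarith [h2n n]
    calc k n ≤ ⌊((2^n : ℕ) : ℝ)⌋₊ := Nat.floor_le_floor h1
      _ = 2^n := Nat.floor_natCast _
  have hwle : ∀ n, w n ≤ u := by
    intro n
    rw [hw_def]
    rw [div_le_iff₀ (h2n n)]
    exact Nat.floor_le (by positivity)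
  have hwgt : ∀ n, u - (1/2:ℝ)^n < w n := by
    intro n
    have hfl : u * 2^n - 1 < (k n : ℝ) := by
      have := Nat.lt_floor_add_one (u * 2^n)
      simp only [hk_def]
      linarith
    have hstep : u - (1/2:ℝ)^n = (u * 2^n - 1)/2^n := by
      rw [div_pow, one_pow]
      field_simp
    rw [hw_def, hstep]
    exact div_lt_div_of_pos_right hfl (h2n n)
  have hhalf : Tendsto (fun n : ℕ => ((1/2:ℝ))^n) atTop (nhds 0) :=
    tendsto_pow_atTop_nhds_zero_of_lt_one (by norm_num) (by norm_num)
  have htend : Tendsto w atTop (nhds u) := by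
    have hlower : Tendsto (fun n : ℕ => u - ((1/2:ℝ))^n) atTop (nhds u) := by
      simpa using tendsto_const_nhds.sub hhalf
    exact tendsto_of_tendsto_of_tendsto_of_le_of_le hlower tendsto_const_nhds
      (fun n => (hwgt n).le) hwle
  -- LHS converges
  have hLHS : Tendsto (fun n => ‖CFC.rpow a (w n) * CFC.rpow b (w n)‖) atTop
      (nhds ‖CFC.rpow a u * CFC.rpow b u‖) := by
    have h1 : Tendsto (fun n => CFC.rpow a (w n)) atTop (nhds (CFC.rpow a u)) :=
      (cordes_cont_rpow ha hu).tendsto.comp htend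
    have h2 : Tendsto (fun n => CFC.rpow b (w n)) atTop (nhds (CFC.rpow b u)) :=
      (cordes_cont_rpow hb hu).tendsto.comp htend
    exact (h1.mul h2).norm
  -- each term bounded
  have hbound : ∀ n, ‖CFC.rpow a (w n) * CFC.rpow b (w n)‖ ≤ C ^ (w n) :=
    fun n => cordes_dyadic ha hb n (k n) (hkle n)
  -- eventual positivity of w n
  have hwev : ∀ᶠ n in atTop, 0 < w n := by
    filter_upwards [hhalf.eventually (gt_mem_nhds hu)] with n hn
    have := hwgt n
    linarith
  rcases eq_or_lt_of_le hC with hC0 | hCpos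
  · -- ‖a * b‖ = 0
    have hub : ∀ᶠ n in atTop, ‖CFC.rpow a (w n) * CFC.rpow b (w n)‖ ≤ 0 := by
      filter_upwards [hwev] with n hn
      have := hbound n
      rwa [← hC0, Real.zero_rpow hn.ne'] at this
    have : ‖CFC.rpow a u * CFC.rpow b u‖ ≤ 0 := le_of_tendsto hLHS hub
    rw [← hC0, Real.zero_rpow hu.ne']
    exact this
  · -- ‖a * b‖ > 0
    have hRHS : Tendsto (fun n => C ^ (w n)) atTop (nhds (C ^ u)) := by
      have hcont : Continuous (fun v : ℝ => C ^ v) := by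
        have : (fun v : ℝ => C ^ v) = fun v => Real.exp (Real.log C * v) := by
          funext v
          rw [Real.rpow_def_of_pos hCpos]
        rw [this]
        exact Real.continuous_exp.comp (continuous_const.mul continuous_id)
      exact (hcont.tendsto u).comp htend
    exact le_of_tendsto_of_tendsto' hLHS hRHS hbound

end Aux

/-- Cordes inequality: for positive (self-adjoint) bounded operators `A, B` on a
complex Hilbert space and `u ∈ [0,1]`, `‖A^u B^u‖ ≤ ‖AB‖^u`, where the powers are
given by the continuous functional calculus. -/
theorem stmt9 {H : Type*} [NormedAddCommGroup H] [InnerProductSpace ℂ H] [CompleteSpace H]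
    (A B : H →L[ℂ] H) (hA : 0 ≤ A) (hB : 0 ≤ B) (u : ℝ) (hu0 : 0 ≤ u) (hu1 : u ≤ 1) :
    ‖CFC.rpow A u * CFC.rpow B u‖ ≤ ‖A * B‖ ^ u := by
  rcases subsingleton_or_nontrivial (H →L[ℂ] H) with hsub | hnt
  · rw [Subsingleton.elim (CFC.rpow A u * CFC.rpow B u) 0, norm_zero]
    exact Real.rpow_nonneg (norm_nonneg _) u
  · exact cordes_general hA hB hu0 hu1
end
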